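/- Assume 1 ≤ minsupp ≤ |𝒯| and let X ∈ MCR. Then the sets A := {F ∈ MFCRMax : X ⊆ F} and B := {G ∈ MMCRMin : G ⊆ X} are nonempty. Put R1 := max{Supp(∧F) : F ∈ A}, R2 := min{Supp(∧G) : G ∈ B}, R3 := min{Supp(∨F) : F ∈ A}, R4 := max{Supp(∨G) : G ∈ B}, and MinConj := min(R1,R2), MaxConj := max(R1,R2), MinDisj := min(R3,R4), MaxDisj := max(R3,R4). Then MinConj ≤ Supp(∧X) ≤ MaxConj, MinDisj ≤ Supp(∨X) ≤ MaxDisj, the quantities MinDisj and MaxDisj are positive, and MinConj/MaxDisj ≤ bond(X) ≤ MaxConj/MinDisj. -/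

import Mathlib

open Finset

variable {τ ι : Type*} [DecidableEq ι]

/-- Conjunctive support: number of transactions containing the whole pattern. -/
def suppConj (T : Finset τ) (items : τ → Finset ι) (X : Finset ι) : ℕ :=
  (T.filter fun t => X ⊆ items t).card

/-- Disjunctive support: number of transactions containing at least one item of the pattern. -/
def suppDisj (T : Finset τ) (items : τ → Finset ι) (X : Finset ι) : ℕ :=
  (T.filter fun t => (X ∩ items t).Nonempty).card

/-- The bond measure (division by zero in `ℚ` yields `0`, matching the convention). -/
def bond (T : Finset τ) (items : τ → Finset ι) (X : Finset ι) : ℚ :=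
  (suppConj T items X : ℚ) / (suppDisj T items X : ℚ)

/-- Correlated rare patterns, as a finite set. -/
def MCR (T : Finset τ) (items : τ → Finset ι) (I : Finset ι) (minsupp : ℕ) (minbond : ℚ) :
    Finset (Finset ι) :=
  I.powerset.filter fun X => minbond ≤ bond T items X ∧ suppConj T items X < minsupp

/-- Closed correlated rare patterns. -/
def MFCR (T : Finset τ) (items : τ → Finset ι) (I : Finset ι) (minsupp : ℕ) (minbond : ℚ) :
    Finset (Finset ι) :=
  (MCR T items I minsupp minbond).filter fun X =>
    ∀ Y ∈ I.powerset, X ⊂ Y → bond T items Y ≠ bond T items X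

/-- Minimal correlated rare patterns. -/
def MMCR (T : Finset τ) (items : τ → Finset ι) (I : Finset ι) (minsupp : ℕ) (minbond : ℚ) :
    Finset (Finset ι) :=
  (MCR T items I minsupp minbond).filter fun X =>
    ∀ Y ∈ X.powerset, Y ⊂ X → bond T items Y ≠ bond T items X

/-- Maximal correlated patterns. -/
def MCMax (T : Finset τ) (items : τ → Finset ι) (I : Finset ι) (minbond : ℚ) :
    Finset (Finset ι) :=
  I.powerset.filter fun X =>
    minbond ≤ bond T items X ∧ ∀ Y ∈ I.powerset, X ⊂ Y → ¬ minbond ≤ bond T items Y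

/-- Minimal rare patterns. -/
def MRMin (T : Finset τ) (items : τ → Finset ι) (I : Finset ι) (minsupp : ℕ) :
    Finset (Finset ι) :=
  I.powerset.filter fun X =>
    suppConj T items X < minsupp ∧ ∀ Y ∈ X.powerset, Y ⊂ X → ¬ suppConj T items Y < minsupp

/-- Maximal closed correlated rare patterns. -/
def MFCRMax (T : Finset τ) (items : τ → Finset ι) (I : Finset ι) (minsupp : ℕ) (minbond : ℚ) :
    Finset (Finset ι) :=
  MFCR T items I minsupp minbond ∩ MCMax T items I minbond

/-- The minimal elements of `MMCR`. -/
def MMCRMin (T : Finset τ) (items : τ → Finset ι) (I : Finset ι) (minsupp : ℕ) (minbond : ℚ) :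
    Finset (Finset ι) :=
  MMCR T items I minsupp minbond ∩ MRMin T items I minsupp

/-!
Conjunctive support is antitone and disjunctive support monotone in the pattern, so the supports
of `X` are sandwiched between those of any superset and those of any subset, and this yields all
the bounds once `A` and `B` are shown to be nonempty.

A maximal correlated superset `F` of `X` lies in `MFCRMax`: it is rare because `X` is, and closed
because a strict superset with the same bond would be correlated. A minimal rare subset `G` of `X`
lies in `MMCRMin`: it is nonempty because `Supp(∧∅) = |𝒯| ≥ minsupp`, so `bond` can only grow
from `X` down to `G`, and a strict subset with the same (positive) bond has the same conjunctive
support as `G`, hence would be rare.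
-/

section Supports

variable (T : Finset τ) (items : τ → Finset ι)

lemma suppConj_antitone : Antitone (suppConj T items) := fun _ _ hXY =>
  card_le_card <| monotone_filter_right _ fun _ _ hY => hXY.trans hY

lemma suppDisj_monotone : Monotone (suppDisj T items) := fun _ _ hXY =>
  card_le_card <| monotone_filter_right _ fun _ _ hX => hX.mono (inter_subset_inter_right hXY)

lemma suppConj_le_suppDisj {X : Finset ι} (hX : X.Nonempty) :
    suppConj T items X ≤ suppDisj T items X :=
  card_le_card <| monotone_filter_right _ fun _ _ hXt => by rwa [inter_eq_left.mpr hXt]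

@[simp]
lemma suppConj_empty : suppConj T items ∅ = T.card := by
  simp [suppConj]

lemma bond_pos_iff {X : Finset ι} :
    0 < bond T items X ↔ 0 < suppConj T items X ∧ 0 < suppDisj T items X := by
  simp [bond, div_pos_iff]

lemma bond_le_bond_of_subset {X Y : Finset ι} (hYX : Y ⊆ X) (hY : 0 < suppDisj T items Y) :
    bond T items X ≤ bond T items Y :=
  div_le_div₀ (Nat.cast_nonneg _) (mod_cast suppConj_antitone T items hYX) (mod_cast hY)
    (mod_cast suppDisj_monotone T items hYX)

lemma suppConj_eq_of_bond_eq {X Y : Finset ι} (hYX : Y ⊆ X) (hX : 0 < bond T items X)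
    (hbond : bond T items Y = bond T items X) : suppConj T items Y = suppConj T items X := by
  obtain ⟨-, hdX⟩ := (bond_pos_iff T items).1 hX
  obtain ⟨-, hdY⟩ := (bond_pos_iff T items).1 (hbond ▸ hX)
  have hcross : suppConj T items Y * suppDisj T items X =
      suppConj T items X * suppDisj T items Y := by
    rw [bond, bond, div_eq_div_iff (mod_cast hdY.ne') (mod_cast hdX.ne')] at hbond
    exact_mod_cast hbond
  refine le_antisymm (Nat.le_of_mul_le_mul_right ?_ hdX) (suppConj_antitone T items hYX)
  calc suppConj T items Y * suppDisj T items X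
      = suppConj T items X * suppDisj T items Y := hcross
    _ ≤ suppConj T items X * suppDisj T items X :=
      Nat.mul_le_mul_left _ (suppDisj_monotone T items hYX)

end Supports

section Extremal

variable {T : Finset τ} {items : τ → Finset ι} {I : Finset ι} {minsupp : ℕ} {minbond : ℚ}
  {X : Finset ι}

lemma bond_pos_of_mem_MCR (hminbond : 0 < minbond) (hX : X ∈ MCR T items I minsupp minbond) :
    0 < bond T items X :=
  hminbond.trans_le (mem_filter.1 hX).2.1

lemma exists_superset_mem_MFCRMax (hX : X ∈ MCR T items I minsupp minbond) :
    ∃ F ∈ MFCRMax T items I minsupp minbond, X ⊆ F := by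
  simp only [MCR, mem_filter, mem_powerset] at hX
  obtain ⟨hXI, hXbond, hXrare⟩ := hX
  let MC := I.powerset.filter fun Y => minbond ≤ bond T items Y
  obtain ⟨F, hXF, hFmax⟩ := MC.exists_le_maximal (a := X) (by simp [MC, hXI, hXbond])
  have hFMC : F ∈ MC := hFmax.prop
  simp only [MC, mem_filter, mem_powerset] at hFMC
  have hFtop : ∀ Y ⊆ I, F ⊂ Y → ¬minbond ≤ bond T items Y := fun Y hY hFY hbY =>
    hFmax.not_gt (mem_filter.2 ⟨mem_powerset.2 hY, hbY⟩) hFY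
  refine ⟨F, ?_, hXF⟩
  simp only [MFCRMax, MFCR, MCMax, MCR, mem_inter, mem_filter, mem_powerset]
  refine ⟨⟨⟨hFMC.1, hFMC.2, (suppConj_antitone T items hXF).trans_lt hXrare⟩, ?_⟩,
    hFMC.1, hFMC.2, hFtop⟩
  exact fun Y hY hFY hbY => hFtop Y hY hFY (hbY ▸ hFMC.2)

lemma exists_subset_mem_MMCRMin (hminsupp : minsupp ≤ T.card) (hminbond : 0 < minbond)
    (hX : X ∈ MCR T items I minsupp minbond) :
    ∃ G ∈ MMCRMin T items I minsupp minbond, G ⊆ X := by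
  obtain ⟨hXconj, -⟩ := (bond_pos_iff T items).1 (bond_pos_of_mem_MCR hminbond hX)
  simp only [MCR, mem_filter, mem_powerset] at hX
  obtain ⟨hXI, hXbond, hXrare⟩ := hX
  let MR := X.powerset.filter fun Y => suppConj T items Y < minsupp
  obtain ⟨G, hGX, hGmin⟩ := MR.exists_le_minimal (a := X) (by simp [MR, hXrare])
  have hGMR : G ∈ MR := hGmin.prop
  simp only [MR, mem_filter, mem_powerset] at hGMR
  have hGbot : ∀ Y ⊆ G, Y ⊂ G → ¬suppConj T items Y < minsupp := fun Y hY hYG hYrare =>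
    hGmin.not_lt (mem_filter.2 ⟨mem_powerset.2 (hY.trans hGX), hYrare⟩) hYG
  have hGne : G.Nonempty := by
    rw [nonempty_iff_ne_empty]
    rintro rfl
    exact (suppConj_empty T items ▸ hGMR.2).not_ge hminsupp
  have hGdisj : 0 < suppDisj T items G :=
    (hXconj.trans_le (suppConj_antitone T items hGX)).trans_le (suppConj_le_suppDisj T items hGne)
  have hGbond : minbond ≤ bond T items G :=
    hXbond.trans (bond_le_bond_of_subset T items hGX hGdisj)
  refine ⟨G, ?_, hGX⟩
  simp only [MMCRMin, MMCR, MRMin, MCR, mem_inter, mem_filter, mem_powerset]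
  refine ⟨⟨⟨hGX.trans hXI, hGbond, hGMR.2⟩, ?_⟩, hGX.trans hXI, hGMR.2, hGbot⟩
  intro Y hY hYG hbY
  refine hGbot Y hY hYG ?_
  rw [suppConj_eq_of_bond_eq T items hYG.subset (hminbond.trans_le hGbond) hbY]
  exact hGMR.2

end Extremal

lemma bounds_of_sandwich {c d r₁ r₂ r₃ r₄ : ℕ} (h₁ : r₁ ≤ c) (h₂ : c ≤ r₂) (h₄ : r₄ ≤ d)
    (h₃ : d ≤ r₃) (hr₄ : 0 < r₄) :
    min r₁ r₂ ≤ c ∧ c ≤ max r₁ r₂ ∧ min r₃ r₄ ≤ d ∧ d ≤ max r₃ r₄ ∧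
      0 < min r₃ r₄ ∧ 0 < max r₃ r₄ ∧
        ((min r₁ r₂ : ℕ) : ℚ) / ((max r₃ r₄ : ℕ) : ℚ) ≤ (c : ℚ) / (d : ℚ) ∧
          (c : ℚ) / (d : ℚ) ≤ ((max r₁ r₂ : ℕ) : ℚ) / ((min r₃ r₄ : ℕ) : ℚ) := by
  have hmin₁ : min r₁ r₂ ≤ c := (min_le_left _ _).trans h₁
  have hmax₁ : c ≤ max r₁ r₂ := h₂.trans (le_max_right _ _)
  have hmin₃ : min r₃ r₄ ≤ d := (min_le_right _ _).trans h₄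
  have hmax₃ : d ≤ max r₃ r₄ := h₃.trans (le_max_left _ _)
  have hd : 0 < d := hr₄.trans_le h₄
  have hmin₃pos : 0 < min r₃ r₄ := lt_min (hd.trans_le h₃) hr₄
  refine ⟨hmin₁, hmax₁, hmin₃, hmax₃, hmin₃pos, hd.trans_le hmax₃, ?_, ?_⟩
  · exact div_le_div₀ (Nat.cast_nonneg _) (mod_cast hmin₁) (mod_cast hd) (mod_cast hmax₃)
  · exact div_le_div₀ (Nat.cast_nonneg _) (mod_cast hmax₁) (mod_cast hmin₃pos) (mod_cast hmin₃)

theorem stmt14_general (T : Finset τ) (items : τ → Finset ι) (I : Finset ι)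
    (minsupp : ℕ) (minbond : ℚ)
    (hs2 : minsupp ≤ T.card)
    (hb0 : 0 < minbond)
    (X : Finset ι) (hX : X ∈ MCR T items I minsupp minbond) :
    let A := (MFCRMax T items I minsupp minbond).filter fun F => X ⊆ F
    let B := (MMCRMin T items I minsupp minbond).filter fun G => G ⊆ X
    ∃ hA : A.Nonempty, ∃ hB : B.Nonempty,
      let R1 := A.sup' hA (suppConj T items)
      let R2 := B.inf' hB (suppConj T items)
      let R3 := A.inf' hA (suppDisj T items)
      let R4 := B.sup' hB (suppDisj T items)
      let MinConj := min R1 R2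
      let MaxConj := max R1 R2
      let MinDisj := min R3 R4
      let MaxDisj := max R3 R4
      MinConj ≤ suppConj T items X ∧ suppConj T items X ≤ MaxConj ∧
        MinDisj ≤ suppDisj T items X ∧ suppDisj T items X ≤ MaxDisj ∧
          0 < MinDisj ∧ 0 < MaxDisj ∧
            (MinConj : ℚ) / (MaxDisj : ℚ) ≤ bond T items X ∧
              bond T items X ≤ (MaxConj : ℚ) / (MinDisj : ℚ) := by
  intro A B
  obtain ⟨F, hF, hXF⟩ := exists_superset_mem_MFCRMax hX
  obtain ⟨G, hG, hGX⟩ := exists_subset_mem_MMCRMin hs2 hb0 hX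
  have hGB : G ∈ B := mem_filter.2 ⟨hG, hGX⟩
  have hGdisj : 0 < suppDisj T items G :=
    ((bond_pos_iff T items).1 (bond_pos_of_mem_MCR hb0 (mem_filter.1 (mem_inter.1 hG).1).1)).2
  refine ⟨⟨F, mem_filter.2 ⟨hF, hXF⟩⟩, ⟨G, hGB⟩, ?_⟩
  exact bounds_of_sandwich
    (sup'_le _ _ fun _ hF' => suppConj_antitone T items (mem_filter.1 hF').2)
    (le_inf' _ _ fun _ hG' => suppConj_antitone T items (mem_filter.1 hG').2)
    (sup'_le _ _ fun _ hG' => suppDisj_monotone T items (mem_filter.1 hG').2)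
    (le_inf' _ _ fun _ hF' => suppDisj_monotone T items (mem_filter.1 hF').2)
    (hGdisj.trans_le (le_sup' _ hGB))

theorem stmt14 (T : Finset τ) (items : τ → Finset ι) (I : Finset ι)
    (hitems : ∀ t ∈ T, items t ⊆ I)
    (minsupp : ℕ) (minbond : ℚ)
    (hs1 : 1 ≤ minsupp) (hs2 : minsupp ≤ T.card)
    (hb0 : 0 < minbond) (hb1 : minbond ≤ 1)
    (X : Finset ι) (hX : X ∈ MCR T items I minsupp minbond) :
    let A := (MFCRMax T items I minsupp minbond).filter fun F => X ⊆ F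
    let B := (MMCRMin T items I minsupp minbond).filter fun G => G ⊆ X
    ∃ hA : A.Nonempty, ∃ hB : B.Nonempty,
      let R1 := A.sup' hA (suppConj T items)
      let R2 := B.inf' hB (suppConj T items)
      let R3 := A.inf' hA (suppDisj T items)
      let R4 := B.sup' hB (suppDisj T items)
      let MinConj := min R1 R2
      let MaxConj := max R1 R2
      let MinDisj := min R3 R4
      let MaxDisj := max R3 R4
      MinConj ≤ suppConj T items X ∧ suppConj T items X ≤ MaxConj ∧
        MinDisj ≤ suppDisj T items X ∧ suppDisj T items X ≤ MaxDisj ∧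
          0 < MinDisj ∧ 0 < MaxDisj ∧
            (MinConj : ℚ) / (MaxDisj : ℚ) ≤ bond T items X ∧
              bond T items X ≤ (MaxConj : ℚ) / (MinDisj : ℚ) :=
  stmt14_general T items I minsupp minbond hs2 hb0 X hX
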